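/- The symmetrized relative entropy (P, Q) ↦ H(P,Q) + H(Q,P) is jointly convex on pairs of positive definite matrices: for λ ∈ [0,1], H(λP₁+(1-λ)P₂, λQ₁+(1-λ)Q₂) + H(λQ₁+(1-λ)Q₂, λP₁+(1-λ)P₂) ≤ λ[H(P₁,Q₁)+H(Q₁,P₁)] + (1-λ)[H(P₂,Q₂)+H(Q₂,P₂)]. -/

import Mathlib

open Matrix
open scoped ComplexOrder

/-- Matrix logarithm via functional calculus (junk value `0` off the Hermitian matrices). -/
noncomputable def mlog {n : ℕ} (A : Matrix (Fin n) (Fin n) ℂ) :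
    Matrix (Fin n) (Fin n) ℂ :=
  if h : A.IsHermitian then h.cfc Real.log else 0

/-- Quantum relative entropy `H(P,Q) = Tr (P (log P - log Q))` (a real number for
positive definite `P, Q`). -/
noncomputable def relEnt {n : ℕ} (P Q : Matrix (Fin n) (Fin n) ℂ) : ℝ :=
  ((P * (mlog P - mlog Q)).trace).re

/-!
Write `S(P, Q) = H(P, Q) + H(Q, P) = Re Tr ((P - Q) (log P - log Q))`. In an eigenbasis of `P`
for the rows and one of `Q` for the columns (eigenvalues `pᵢ`, `qⱼ`), this is
`∑ (pᵢ - qⱼ) (log pᵢ - log qⱼ) |Wᵢⱼ|²`, and the scalar identity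
`(p - q) (log p - log q) = ∫₀¹ (p - q)² / (t p + (1 - t) q) dt` turns it into `∫₀¹ φₜ(P, Q) dt`
with `φₜ(P, Q) = ∑ |Cᵢⱼ|² / (t pᵢ + (1 - t) qⱼ)`, `C` being `P - Q` in these coordinates.
Completing the square entrywise gives
`φₜ(P, Q) = max_Y (2 Re Tr ((P - Q) Y) - t Tr (Yᴴ P Y) - (1 - t) Tr (Yᴴ Y Q))`, a maximum of
functions linear in `(P, Q)`. So every `φₜ` is jointly convex, and so is its integral `S`.
-/

open ComplexConjugate

lemma mul_add_one_sub_mul_pos {p q t : ℝ} (hp : 0 < p) (hq : 0 < q)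
    (ht : t ∈ Set.Icc (0 : ℝ) 1) : 0 < t * p + (1 - t) * q := by
  simpa using convex_Ioi (0 : ℝ) hp hq ht.1 (sub_nonneg.2 ht.2) (add_sub_cancel t 1)

lemma two_re_conj_mul_sub_le (c z : ℂ) {d : ℝ} (hd : 0 < d) :
    2 * (conj c * z).re - d * ‖z‖ ^ 2 ≤ ‖c‖ ^ 2 / d := by
  have h := Complex.normSq_nonneg (c - d * z)
  rw [Complex.normSq_sub, Complex.normSq_eq_norm_sq, Complex.normSq_eq_norm_sq, norm_mul,
    Complex.norm_real, Real.norm_of_nonneg hd.le] at h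
  rw [le_div_iff₀ hd]
  have : (c * conj (d * z)).re = d * (conj c * z).re := by
    rw [map_mul, Complex.conj_ofReal, mul_left_comm, Complex.re_ofReal_mul,
      ← Complex.conj_re (c * _), map_mul, Complex.conj_conj]
  nlinarith

lemma two_re_conj_mul_div_sub_eq (c : ℂ) {d : ℝ} (hd : d ≠ 0) :
    2 * (conj c * (c / d)).re - d * ‖c / d‖ ^ 2 = ‖c‖ ^ 2 / d := by
  rw [mul_div_assoc', Complex.conj_mul', norm_div, Complex.norm_real, Real.norm_eq_abs, div_pow,
    sq_abs, ← Complex.ofReal_pow, ← Complex.ofReal_div, Complex.ofReal_re]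
  field_simp
  ring

lemma continuousOn_div_mul_add_one_sub_mul (c : ℝ) {p q : ℝ} (hp : 0 < p) (hq : 0 < q) :
    ContinuousOn (fun t => c / (t * p + (1 - t) * q)) (Set.uIcc 0 1) :=
  continuousOn_const.div (by fun_prop) fun t ht =>
    (mul_add_one_sub_mul_pos hp hq (by rwa [Set.uIcc_of_le zero_le_one] at ht)).ne'

lemma integral_sq_sub_div_mul_add_one_sub_mul {p q : ℝ} (hp : 0 < p) (hq : 0 < q) :
    ∫ t in (0 : ℝ)..1, (p - q) ^ 2 / (t * p + (1 - t) * q)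
      = (p - q) * (Real.log p - Real.log q) := by
  have hpos : ∀ t ∈ Set.uIcc (0 : ℝ) 1, 0 < t * p + (1 - t) * q := fun t ht =>
    mul_add_one_sub_mul_pos hp hq (by rwa [Set.uIcc_of_le zero_le_one] at ht)
  have hderiv : ∀ t ∈ Set.uIcc (0 : ℝ) 1,
      HasDerivAt (fun s => (p - q) * Real.log (s * p + (1 - s) * q))
        ((p - q) ^ 2 / (t * p + (1 - t) * q)) t := by
    intro t ht
    have hlin : HasDerivAt (fun s : ℝ => s * p + (1 - s) * q) (p - q) t :=
      (((hasDerivAt_id' t).mul_const p).add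
        (((hasDerivAt_id' t).const_sub 1).mul_const q)).congr_deriv (by ring)
    exact ((hlin.log (hpos t ht).ne').const_mul (p - q)).congr_deriv (by ring)
  rw [intervalIntegral.integral_eq_sub_of_hasDerivAt hderiv
    (continuousOn_div_mul_add_one_sub_mul _ hp hq).intervalIntegrable]
  simp only [one_mul, sub_self, zero_mul, add_zero, zero_add, sub_zero]
  ring

lemma Matrix.PosDef.smul_add_one_sub_smul {ι 𝕜 : Type*} [RCLike 𝕜] {A B : Matrix ι ι 𝕜}
    (hA : A.PosDef) (hB : B.PosDef) {l : ℝ} (hl0 : 0 ≤ l) (hl1 : l ≤ 1) :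
    (l • A + (1 - l) • B).PosDef := by
  rcases hl0.eq_or_lt with rfl | hl
  · simpa using hB
  · exact (hA.smul hl).add_posSemidef (hB.posSemidef.smul (sub_nonneg.2 hl1))

variable {ι : Type*} [Fintype ι]

lemma Matrix.re_trace_conjTranspose_mul (M N : Matrix ι ι ℂ) :
    (Mᴴ * N).trace.re = ∑ i, ∑ j, (conj (M i j) * N i j).re := by
  simp only [trace, diag, mul_apply, conjTranspose_apply, Complex.re_sum, RCLike.star_def]
  exact Finset.sum_comm

noncomputable def variationalFn (A B : Matrix ι ι ℂ) (t : ℝ) (Y : Matrix ι ι ℂ) : ℝ :=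
  2 * ((A - B) * Y).trace.re - t * (Yᴴ * A * Y).trace.re - (1 - t) * (Yᴴ * Y * B).trace.re

lemma variationalFn_smul_add_smul (A₁ A₂ B₁ B₂ : Matrix ι ι ℂ) (a b t : ℝ) (Y : Matrix ι ι ℂ) :
    variationalFn (a • A₁ + b • A₂) (a • B₁ + b • B₂) t Y
      = a * variationalFn A₁ B₁ t Y + b * variationalFn A₂ B₂ t Y := by
  have hsub : a • A₁ + b • A₂ - (a • B₁ + b • B₂) = a • (A₁ - B₁) + b • (A₂ - B₂) := by
    rw [smul_sub, smul_sub]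
    abel
  simp only [variationalFn, hsub, Matrix.add_mul, Matrix.mul_add, Matrix.smul_mul,
    Matrix.mul_smul, trace_add, trace_smul, Complex.add_re, Complex.real_smul,
    Complex.re_ofReal_mul]
  ring

variable [DecidableEq ι]

namespace Matrix.IsHermitian
variable {A : Matrix ι ι ℂ} (hA : A.IsHermitian)

lemma star_eigenvectorUnitary_mul_cfc (f : ℝ → ℝ) :
    star (hA.eigenvectorUnitary : Matrix ι ι ℂ) * hA.cfc f
      = diagonal (RCLike.ofReal ∘ f ∘ hA.eigenvalues)
        * star (hA.eigenvectorUnitary : Matrix ι ι ℂ) := by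
  simp [IsHermitian.cfc, ← mul_assoc]

lemma cfc_mul_eigenvectorUnitary (f : ℝ → ℝ) :
    hA.cfc f * (hA.eigenvectorUnitary : Matrix ι ι ℂ)
      = (hA.eigenvectorUnitary : Matrix ι ι ℂ)
        * diagonal (RCLike.ofReal ∘ f ∘ hA.eigenvalues) := by
  simp [IsHermitian.cfc, mul_assoc]

lemma cfc_id : hA.cfc id = A := hA.spectral_theorem.symm

end Matrix.IsHermitian

variable {A B : Matrix ι ι ℂ}

noncomputable def eigenCoords (hA : A.IsHermitian) (hB : B.IsHermitian) (Y : Matrix ι ι ℂ) :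
    Matrix ι ι ℂ :=
  star (hA.eigenvectorUnitary : Matrix ι ι ℂ) * Y * hB.eigenvectorUnitary

section eigenCoords
variable (hA : A.IsHermitian) (hB : B.IsHermitian)

lemma eigenCoords_surjective : Function.Surjective (eigenCoords hA hB) := by
  intro M
  refine ⟨hA.eigenvectorUnitary * M * star (hB.eigenvectorUnitary : Matrix ι ι ℂ), ?_⟩
  simp [eigenCoords, mul_assoc, ← mul_assoc (star (hA.eigenvectorUnitary : Matrix ι ι ℂ))]

lemma eigenCoords_sub (X Y : Matrix ι ι ℂ) :
    eigenCoords hA hB (X - Y) = eigenCoords hA hB X - eigenCoords hA hB Y := by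
  simp only [eigenCoords, Matrix.mul_sub, Matrix.sub_mul]

lemma eigenCoords_cfc_mul (f : ℝ → ℝ) (Y : Matrix ι ι ℂ) :
    eigenCoords hA hB (hA.cfc f * Y)
      = diagonal (RCLike.ofReal ∘ f ∘ hA.eigenvalues) * eigenCoords hA hB Y := by
  simp only [eigenCoords, ← mul_assoc, hA.star_eigenvectorUnitary_mul_cfc]

lemma eigenCoords_mul_cfc (f : ℝ → ℝ) (Y : Matrix ι ι ℂ) :
    eigenCoords hA hB (Y * hB.cfc f)
      = eigenCoords hA hB Y * diagonal (RCLike.ofReal ∘ f ∘ hB.eigenvalues) := by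
  simp only [eigenCoords, mul_assoc, hB.cfc_mul_eigenvectorUnitary]

lemma eigenCoords_cfc_sub_cfc_apply (f : ℝ → ℝ) (i j : ι) :
    eigenCoords hA hB (hA.cfc f - hB.cfc f) i j
      = (f (hA.eigenvalues i) - f (hB.eigenvalues j) : ℝ) * eigenCoords hA hB 1 i j := by
  conv_lhs => rw [← mul_one (hA.cfc f), ← one_mul (hB.cfc f)]
  rw [eigenCoords_sub, eigenCoords_cfc_mul, eigenCoords_mul_cfc]
  simp only [Matrix.sub_apply, diagonal_mul, mul_diagonal, Function.comp_apply,
    Complex.coe_algebraMap, Complex.ofReal_sub]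
  ring

lemma eigenCoords_sub_apply (i j : ι) :
    eigenCoords hA hB (A - B) i j
      = (hA.eigenvalues i - hB.eigenvalues j : ℝ) * eigenCoords hA hB 1 i j := by
  have h := eigenCoords_cfc_sub_cfc_apply hA hB id i j
  rwa [hA.cfc_id, hB.cfc_id] at h

lemma eigenCoords_mul_left (Y : Matrix ι ι ℂ) :
    eigenCoords hA hB (A * Y)
      = diagonal (RCLike.ofReal ∘ hA.eigenvalues) * eigenCoords hA hB Y := by
  have h := eigenCoords_cfc_mul hA hB id Y
  rwa [hA.cfc_id] at h

lemma eigenCoords_mul_right (Y : Matrix ι ι ℂ) :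
    eigenCoords hA hB (Y * B)
      = eigenCoords hA hB Y * diagonal (RCLike.ofReal ∘ hB.eigenvalues) := by
  have h := eigenCoords_mul_cfc hA hB id Y
  rwa [hB.cfc_id] at h

lemma trace_conjTranspose_eigenCoords_mul (X Y : Matrix ι ι ℂ) :
    ((eigenCoords hA hB X)ᴴ * eigenCoords hA hB Y).trace = (Xᴴ * Y).trace := by
  set U : Matrix ι ι ℂ := ↑hA.eigenvectorUnitary
  set V : Matrix ι ι ℂ := ↑hB.eigenvectorUnitary
  have hU : U * star U = 1 := Unitary.mul_star_self_of_mem hA.eigenvectorUnitary.2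
  have hV : V * star V = 1 := Unitary.mul_star_self_of_mem hB.eigenvectorUnitary.2
  calc ((star U * X * V)ᴴ * (star U * Y * V)).trace
      = (V * star V * (Xᴴ * (U * star U) * Y)).trace := by
        simp only [← star_eq_conjTranspose, star_mul, star_star, ← mul_assoc]
        rw [trace_mul_comm _ V]
        simp only [← mul_assoc]
    _ = (Xᴴ * Y).trace := by rw [hU, hV, one_mul, mul_one]

lemma re_trace_sub_mul_eq_sum (Y : Matrix ι ι ℂ) :
    ((A - B) * Y).trace.re
      = ∑ i, ∑ j, (conj (eigenCoords hA hB (A - B) i j) * eigenCoords hA hB Y i j).re := by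
  rw [← (hA.sub hB).eq, ← trace_conjTranspose_eigenCoords_mul hA hB, re_trace_conjTranspose_mul,
    (hA.sub hB).eq]

lemma re_trace_conjTranspose_mul_mul_eq_sum (Y : Matrix ι ι ℂ) :
    (Yᴴ * A * Y).trace.re = ∑ i, ∑ j, hA.eigenvalues i * ‖eigenCoords hA hB Y i j‖ ^ 2 := by
  rw [mul_assoc, ← trace_conjTranspose_eigenCoords_mul hA hB, eigenCoords_mul_left,
    re_trace_conjTranspose_mul]
  refine Finset.sum_congr rfl fun i _ => Finset.sum_congr rfl fun j _ => ?_
  rw [diagonal_mul, mul_left_comm, Complex.conj_mul']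
  simp [← Complex.ofReal_pow]

lemma re_trace_conjTranspose_mul_self_mul_eq_sum (Y : Matrix ι ι ℂ) :
    (Yᴴ * Y * B).trace.re = ∑ i, ∑ j, hB.eigenvalues j * ‖eigenCoords hA hB Y i j‖ ^ 2 := by
  rw [mul_assoc, ← trace_conjTranspose_eigenCoords_mul hA hB, eigenCoords_mul_right,
    re_trace_conjTranspose_mul]
  refine Finset.sum_congr rfl fun i _ => Finset.sum_congr rfl fun j _ => ?_
  rw [mul_diagonal, ← mul_assoc, Complex.conj_mul']
  simp [← Complex.ofReal_pow, mul_comm]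

end eigenCoords

noncomputable def symmRelEntIntegrand (hA : A.IsHermitian) (hB : B.IsHermitian) (t : ℝ) : ℝ :=
  ∑ i, ∑ j, ‖eigenCoords hA hB (A - B) i j‖ ^ 2
    / (t * hA.eigenvalues i + (1 - t) * hB.eigenvalues j)

section variational
variable (hA : A.IsHermitian) (hB : B.IsHermitian)

lemma variationalFn_eq_sum (t : ℝ) (Y : Matrix ι ι ℂ) :
    variationalFn A B t Y = ∑ i, ∑ j,
      (2 * (conj (eigenCoords hA hB (A - B) i j) * eigenCoords hA hB Y i j).re
        - (t * hA.eigenvalues i + (1 - t) * hB.eigenvalues j)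
          * ‖eigenCoords hA hB Y i j‖ ^ 2) := by
  rw [variationalFn, re_trace_sub_mul_eq_sum hA hB, re_trace_conjTranspose_mul_mul_eq_sum hA hB,
    re_trace_conjTranspose_mul_self_mul_eq_sum hA hB]
  simp only [Finset.mul_sum, ← Finset.sum_sub_distrib]
  refine Finset.sum_congr rfl fun i _ => Finset.sum_congr rfl fun j _ => ?_
  ring

end variational

section posDef
variable (hA : A.PosDef) (hB : B.PosDef) {t : ℝ} (ht : t ∈ Set.Icc (0 : ℝ) 1)
include hA hB ht

lemma variationalFn_le_symmRelEntIntegrand (Y : Matrix ι ι ℂ) :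
    variationalFn A B t Y ≤ symmRelEntIntegrand hA.1 hB.1 t := by
  rw [variationalFn_eq_sum hA.1 hB.1, symmRelEntIntegrand]
  gcongr with i _ j _
  exact two_re_conj_mul_sub_le _ _
    (mul_add_one_sub_mul_pos (hA.eigenvalues_pos i) (hB.eigenvalues_pos j) ht)

lemma exists_variationalFn_eq_symmRelEntIntegrand :
    ∃ Y, variationalFn A B t Y = symmRelEntIntegrand hA.1 hB.1 t := by
  obtain ⟨Y, hY⟩ := eigenCoords_surjective hA.1 hB.1 (Matrix.of fun i j =>
    eigenCoords hA.1 hB.1 (A - B) i j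
      / (t * hA.1.eigenvalues i + (1 - t) * hB.1.eigenvalues j : ℝ))
  refine ⟨Y, ?_⟩
  rw [variationalFn_eq_sum hA.1 hB.1, symmRelEntIntegrand, hY]
  refine Finset.sum_congr rfl fun i _ => Finset.sum_congr rfl fun j _ => ?_
  exact two_re_conj_mul_div_sub_eq _
    (mul_add_one_sub_mul_pos (hA.eigenvalues_pos i) (hB.eigenvalues_pos j) ht).ne'

end posDef

lemma symmRelEntIntegrand_smul_add_smul_le {A₁ A₂ B₁ B₂ : Matrix ι ι ℂ}
    (hA₁ : A₁.PosDef) (hA₂ : A₂.PosDef) (hB₁ : B₁.PosDef) (hB₂ : B₂.PosDef) {a b : ℝ}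
    (ha : 0 ≤ a) (hb : 0 ≤ b) (hA : (a • A₁ + b • A₂).PosDef) (hB : (a • B₁ + b • B₂).PosDef)
    {t : ℝ} (ht : t ∈ Set.Icc (0 : ℝ) 1) :
    symmRelEntIntegrand hA.1 hB.1 t
      ≤ a * symmRelEntIntegrand hA₁.1 hB₁.1 t + b * symmRelEntIntegrand hA₂.1 hB₂.1 t := by
  obtain ⟨Y, hY⟩ := exists_variationalFn_eq_symmRelEntIntegrand hA hB ht
  rw [← hY, variationalFn_smul_add_smul]
  gcongr
  · exact variationalFn_le_symmRelEntIntegrand hA₁ hB₁ ht Y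
  · exact variationalFn_le_symmRelEntIntegrand hA₂ hB₂ ht Y

section integral

lemma re_trace_sub_mul_cfc_sub_cfc (hA : A.IsHermitian) (hB : B.IsHermitian) (g : ℝ → ℝ) :
    ((A - B) * (hA.cfc g - hB.cfc g)).trace.re = ∑ i, ∑ j,
      (hA.eigenvalues i - hB.eigenvalues j) * (g (hA.eigenvalues i) - g (hB.eigenvalues j))
        * ‖eigenCoords hA hB 1 i j‖ ^ 2 := by
  rw [re_trace_sub_mul_eq_sum hA hB]
  refine Finset.sum_congr rfl fun i _ => Finset.sum_congr rfl fun j _ => ?_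
  rw [eigenCoords_sub_apply, eigenCoords_cfc_sub_cfc_apply, map_mul, Complex.conj_ofReal,
    mul_mul_mul_comm, Complex.conj_mul', ← Complex.ofReal_mul, ← Complex.ofReal_pow,
    ← Complex.ofReal_mul, Complex.ofReal_re]

variable (hA : A.PosDef) (hB : B.PosDef)

lemma symmRelEntIntegrand_eq_sum (t : ℝ) :
    symmRelEntIntegrand hA.1 hB.1 t = ∑ i, ∑ j, ‖eigenCoords hA.1 hB.1 1 i j‖ ^ 2
      * ((hA.1.eigenvalues i - hB.1.eigenvalues j) ^ 2
        / (t * hA.1.eigenvalues i + (1 - t) * hB.1.eigenvalues j)) := by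
  refine Finset.sum_congr rfl fun i _ => Finset.sum_congr rfl fun j _ => ?_
  rw [eigenCoords_sub_apply, norm_mul, Complex.norm_real, Real.norm_eq_abs, mul_pow, sq_abs,
    mul_comm, mul_div_assoc]

lemma continuousOn_symmRelEntIntegrand :
    ContinuousOn (symmRelEntIntegrand hA.1 hB.1) (Set.uIcc 0 1) :=
  continuousOn_finsetSum _ fun i _ => continuousOn_finsetSum _ fun j _ =>
    continuousOn_div_mul_add_one_sub_mul _ (hA.eigenvalues_pos i) (hB.eigenvalues_pos j)

lemma integral_symmRelEntIntegrand :
    ∫ t in (0 : ℝ)..1, symmRelEntIntegrand hA.1 hB.1 t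
      = ((A - B) * (hA.1.cfc Real.log - hB.1.cfc Real.log)).trace.re := by
  have hcont (i j : ι) : ContinuousOn (fun t => ‖eigenCoords hA.1 hB.1 1 i j‖ ^ 2
      * ((hA.1.eigenvalues i - hB.1.eigenvalues j) ^ 2
        / (t * hA.1.eigenvalues i + (1 - t) * hB.1.eigenvalues j))) (Set.uIcc 0 1) :=
    continuousOn_const.mul
      (continuousOn_div_mul_add_one_sub_mul _ (hA.eigenvalues_pos i) (hB.eigenvalues_pos j))
  simp only [symmRelEntIntegrand_eq_sum hA hB]
  rw [re_trace_sub_mul_cfc_sub_cfc, intervalIntegral.integral_finsetSum fun i _ =>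
    (continuousOn_finsetSum _ fun j _ => hcont i j).intervalIntegrable]
  refine Finset.sum_congr rfl fun i _ => ?_
  rw [intervalIntegral.integral_finsetSum fun j _ => (hcont i j).intervalIntegrable]
  refine Finset.sum_congr rfl fun j _ => ?_
  rw [intervalIntegral.integral_const_mul,
    integral_sq_sub_div_mul_add_one_sub_mul (hA.eigenvalues_pos i) (hB.eigenvalues_pos j)]
  ring

end integral

lemma mlog_of_isHermitian {n : ℕ} {A : Matrix (Fin n) (Fin n) ℂ} (hA : A.IsHermitian) :
    mlog A = hA.cfc Real.log :=
  dif_pos hA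

lemma relEnt_add_relEnt {n : ℕ} (P Q : Matrix (Fin n) (Fin n) ℂ) :
    relEnt P Q + relEnt Q P = ((P - Q) * (mlog P - mlog Q)).trace.re := by
  rw [relEnt, relEnt, ← Complex.add_re, ← trace_add, ← neg_sub (mlog P), mul_neg,
    ← sub_eq_add_neg, ← sub_mul]

lemma relEnt_add_relEnt_eq_integral {n : ℕ} {P Q : Matrix (Fin n) (Fin n) ℂ} (hP : P.PosDef)
    (hQ : Q.PosDef) :
    relEnt P Q + relEnt Q P = ∫ t in (0 : ℝ)..1, symmRelEntIntegrand hP.1 hQ.1 t := by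
  rw [relEnt_add_relEnt, integral_symmRelEntIntegrand hP hQ, mlog_of_isHermitian hP.1,
    mlog_of_isHermitian hQ.1]

/-- **Joint convexity of the symmetrized relative entropy** `(P,Q) ↦ H(P,Q) + H(Q,P)`
on pairs of positive definite matrices. -/
theorem symmetrized_relEnt_jointly_convex {n : ℕ}
    (P₁ P₂ Q₁ Q₂ : Matrix (Fin n) (Fin n) ℂ)
    (hP₁ : P₁.PosDef) (hP₂ : P₂.PosDef) (hQ₁ : Q₁.PosDef) (hQ₂ : Q₂.PosDef)
    (l : ℝ) (hl0 : 0 ≤ l) (hl1 : l ≤ 1) :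
    relEnt (l • P₁ + (1 - l) • P₂) (l • Q₁ + (1 - l) • Q₂)
      + relEnt (l • Q₁ + (1 - l) • Q₂) (l • P₁ + (1 - l) • P₂)
      ≤ l * (relEnt P₁ Q₁ + relEnt Q₁ P₁) + (1 - l) * (relEnt P₂ Q₂ + relEnt Q₂ P₂) := by
  have hP := hP₁.smul_add_one_sub_smul hP₂ hl0 hl1
  have hQ := hQ₁.smul_add_one_sub_smul hQ₂ hl0 hl1
  have hint {A B : Matrix (Fin n) (Fin n) ℂ} (hA : A.PosDef) (hB : B.PosDef) :
      IntervalIntegrable (symmRelEntIntegrand hA.1 hB.1) MeasureTheory.volume 0 1 :=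
    (continuousOn_symmRelEntIntegrand hA hB).intervalIntegrable
  rw [relEnt_add_relEnt_eq_integral hP hQ, relEnt_add_relEnt_eq_integral hP₁ hQ₁,
    relEnt_add_relEnt_eq_integral hP₂ hQ₂, ← intervalIntegral.integral_const_mul,
    ← intervalIntegral.integral_const_mul,
    ← intervalIntegral.integral_add ((hint hP₁ hQ₁).const_mul l) ((hint hP₂ hQ₂).const_mul _)]
  exact intervalIntegral.integral_mono_on zero_le_one (hint hP hQ)
    (((hint hP₁ hQ₁).const_mul l).add ((hint hP₂ hQ₂).const_mul _)) fun t ht =>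
      symmRelEntIntegrand_smul_add_smul_le hP₁ hP₂ hQ₁ hQ₂ hl0 (sub_nonneg.2 hl1) hP hQ ht
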